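/- arXiv:2411.00160 — 5 statements merged into one kernel-verified Lean document; each statement's English description precedes it below -/
import Mathlib

section
/- For any integer n ≥ 2, every real c with 1 < c < n lies in M_n; that is, there exists a sequence (a_k) with a_k ∈ D_n and 1 + Σ_{k=1}^∞ a_k c^{-k} = 0. -/
noncomputable def greedyRem (c : ℝ) : ℕ → ℝ
  | 0 => 1
  | k + 1 => Int.fract (c * greedyRem c k)

theorem real_interval_subset_M (n : ℕ) (hn : 2 ≤ n) (c : ℝ)
    (h1 : 1 < c) (h2 : c < n) :
    ∃ a : ℕ → ℝ, (∀ k, ∃ j : ℤ, |j| ≤ (n : ℤ) - 1 ∧ a k = j) ∧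
      HasSum (fun k => a k / c ^ (k + 1)) (-1) := by
  have hc0 : (0:ℝ) < c := lt_trans one_pos h1
  set r : ℕ → ℝ := greedyRem c with hr
  set d : ℕ → ℤ := fun k => ⌊c * r k⌋ with hd
  have hr0 : ∀ k, 0 ≤ r k := by
    intro k
    cases k with
    | zero => exact zero_le_one
    | succ m => exact Int.fract_nonneg _
  have hr1 : ∀ k, r k ≤ 1 := by
    intro k
    cases k with
    | zero => exact le_refl 1
    | succ m => exact le_of_lt (Int.fract_lt_one _)
  have hd0 : ∀ k, 0 ≤ d k := fun k =>
    Int.le_floor.2 (by simpa using mul_nonneg hc0.le (hr0 k))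
  have hdle : ∀ k, d k ≤ (n : ℤ) - 1 := by
    intro k
    have : c * r k < n := by
      calc c * r k ≤ c * 1 := mul_le_mul_of_nonneg_left (hr1 k) hc0.le
        _ = c := mul_one c
        _ < n := h2
    have h := Int.floor_lt.2 (show c * r k < ((n:ℤ):ℝ) by exact_mod_cast this)
    simp only [hd]
    omega
  -- recurrence : r (k+1) = c * r k - d k
  have hrec : ∀ k, r (k + 1) = c * r k - d k := by
    intro k
    have h0 : r (k+1) = Int.fract (c * r k) := rfl
    simp only [h0, Int.fract, hd]
  -- partial sums of f k = d k / c^(k+1)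
  set f : ℕ → ℝ := fun k => (d k : ℝ) / c ^ (k + 1) with hf
  have hpart : ∀ m, ∑ j ∈ Finset.range m, f j = 1 - r m / c ^ m := by
    intro m
    induction m with
    | zero => simp [hr, greedyRem]
    | succ m ih =>
        rw [Finset.sum_range_succ, ih, hrec m, hf]
        have hcm : (c:ℝ) ^ m ≠ 0 := pow_ne_zero _ hc0.ne'
        have hcm1 : (c:ℝ) ^ (m+1) ≠ 0 := pow_ne_zero _ hc0.ne'
        field_simp
        ring
  have htend : Filter.Tendsto (fun m => ∑ j ∈ Finset.range m, f j)
      Filter.atTop (nhds 1) := by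
    have h0 : Filter.Tendsto (fun m : ℕ => r m / c ^ m) Filter.atTop (nhds 0) := by
      have hbound : Filter.Tendsto (fun m : ℕ => (c ^ m)⁻¹) Filter.atTop (nhds 0) :=
        tendsto_inv_atTop_zero.comp (tendsto_pow_atTop_atTop_of_one_lt h1)
      apply squeeze_zero (fun m => div_nonneg (hr0 m) (pow_nonneg hc0.le m))
        (fun m => ?_) hbound
      rw [div_eq_mul_inv]
      calc r m * (c ^ m)⁻¹ ≤ 1 * (c ^ m)⁻¹ := by
            apply mul_le_mul_of_nonneg_right (hr1 m)
            positivity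
        _ = (c ^ m)⁻¹ := one_mul _
    have := Filter.Tendsto.sub (tendsto_const_nhds (x := (1:ℝ))) h0
    simpa [← hpart] using this
  have hfs : HasSum f 1 := by
    rw [hasSum_iff_tendsto_nat_of_nonneg (fun k => by
      have := hd0 k
      exact div_nonneg (by exact_mod_cast this) (pow_nonneg hc0.le _))]
    exact htend
  refine ⟨fun k => -(d k : ℝ), fun k => ⟨-(d k), ?_, by push_cast; ring⟩, ?_⟩
  · rw [abs_neg, abs_of_nonneg (hd0 k)]; exact hdle k
  · have := hfs.neg
    simpa [hf, neg_div] using this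
end

section
/- Let n ≥ 2 be an integer, c ∈ ℂ with |c| > 1, m ≥ 1, and a_1, ..., a_m ∈ D_n. Suppose w ∈ E(c, 2n−1) satisfies 1 + Σ_{k=1}^m a_k c^{-k} = w / (2 c^{m+1}). Then there exists a sequence (q_k)_{k≥1} with q_k ∈ D_n for all k and 1 + Σ_{k=1}^∞ q_k c^{-k} = 0 (i.e., c ∈ M_n). -/
/-- `A n = {-n+1, -n+3, ..., n-1} ⊂ ℂ`. -/
def Acoef (n : ℕ) : Set ℂ := {x | ∃ k : ℕ, k < n ∧ x = (n : ℂ) - 1 - 2 * k}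

/-- The collinear fractal `E(c,n)`. -/
def E (c : ℂ) (n : ℕ) : Set ℂ :=
  {z | ∃ a : ℕ → ℂ, (∀ k, a k ∈ Acoef n) ∧ HasSum (fun k => a k / c ^ k) z}

/-- `D n = {1-n, ..., -1, 0, 1, ..., n-1} ⊂ ℂ`. -/
def Dcoef (n : ℕ) : Set ℂ := {x | ∃ j : ℤ, |j| ≤ (n : ℤ) - 1 ∧ x = j}
/-!
Write `w = ∑ b_k c^{-k}` with `b_k ∈ A_{2n-1}`. Since `A_{2n-1} = 2 D_n`, the digits `-b_k / 2` lie
in `D_n`, and appending them to `a_0, …, a_{m-1}` gives a `D_n`-expansion of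
`∑ a_k c^{-(k+1)} - w / (2 c^{m+1})`, which is `-1` by hypothesis.
-/

theorem neg_div_two_mem_Dcoef {n : ℕ} {b : ℂ} (hb : b ∈ Acoef (2 * n - 1)) :
    -b / 2 ∈ Dcoef n := by
  obtain ⟨k, hk, rfl⟩ := hb
  refine ⟨k - (n - 1 : ℤ), abs_le.mpr ⟨by omega, by omega⟩, ?_⟩
  rcases n with _ | n
  · omega
  · push_cast [Nat.mul_succ, Nat.add_sub_cancel]
    ring

theorem HasSum.prepend_digits {K : Type*} [Field K] [TopologicalSpace K]
    [IsTopologicalRing K] {c s : K} {g : ℕ → K} (hg : HasSum (fun j => g j / c ^ j) s)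
    (m : ℕ) (a : ℕ → K) :
    HasSum (fun k => (if k < m then a k else g (k - m)) / c ^ (k + 1))
      (∑ k ∈ Finset.range m, a k / c ^ (k + 1) + s / c ^ (m + 1)) := by
  set f : ℕ → K := fun k => (if k < m then a k else g (k - m)) / c ^ (k + 1)
  have htail : HasSum (fun j => f (j + m)) (s / c ^ (m + 1)) := by
    refine (hg.div_const (c ^ (m + 1))).congr_fun fun j => ?_
    simp only [f, if_neg (Nat.not_lt.mpr (Nat.le_add_left m j)), Nat.add_sub_cancel, div_div,
      ← pow_add]
    ring
  have hhead : ∑ k ∈ Finset.range m, f k = ∑ k ∈ Finset.range m, a k / c ^ (k + 1) :=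
    Finset.sum_congr rfl fun k hk => by simp only [f, if_pos (Finset.mem_range.mp hk)]
  rw [add_comm, ← hhead]
  exact (hasSum_nat_add_iff m).mp htail

theorem mem_M_of_polynomial_in_E_general (n : ℕ) (c : ℂ)
    (m : ℕ) (a : ℕ → ℂ) (ha : ∀ k < m, a k ∈ Dcoef n)
    (w : ℂ) (hw : w ∈ E c (2 * n - 1))
    (heq : 1 + ∑ k ∈ Finset.range m, a k / c ^ (k + 1) = w / (2 * c ^ (m + 1))) :
    ∃ q : ℕ → ℂ, (∀ k, q k ∈ Dcoef n) ∧ HasSum (fun k => q k / c ^ (k + 1)) (-1) := by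
  obtain ⟨b, hb, hbw⟩ := hw
  have hhalf : HasSum (fun j => -b j / 2 / c ^ j) (-w / 2) := by
    simpa only [neg_div, div_right_comm] using (hbw.div_const 2).neg
  refine ⟨fun k => if k < m then a k else -b (k - m) / 2, fun k => ?_, ?_⟩
  · by_cases hk : k < m
    · simpa only [if_pos hk] using ha k hk
    · simpa only [if_neg hk] using neg_div_two_mem_Dcoef (hb (k - m))
  · have hsum : ∑ k ∈ Finset.range m, a k / c ^ (k + 1) + -w / 2 / c ^ (m + 1) = -1 := by
      linear_combination heq
    simpa only [hsum] using hhalf.prepend_digits m a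

theorem mem_M_of_polynomial_in_E (n : ℕ) (hn : 2 ≤ n) (c : ℂ) (hc : 1 < ‖c‖)
    (m : ℕ) (hm : 1 ≤ m) (a : ℕ → ℂ) (ha : ∀ k < m, a k ∈ Dcoef n)
    (w : ℂ) (hw : w ∈ E c (2 * n - 1))
    (heq : 1 + ∑ k ∈ Finset.range m, a k / c ^ (k + 1) = w / (2 * c ^ (m + 1))) :
    ∃ q : ℕ → ℂ, (∀ k, q k ∈ Dcoef n) ∧ HasSum (fun k => q k / c ^ (k + 1)) (-1) :=
  mem_M_of_polynomial_in_E_general n c m a ha w hw heq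
end

section
/- Let n ≥ 2 be an integer and c ∈ ℂ with Im(c) ≠ 0, |c| > 1, |c+1| ≤ √(n+1), and |c−1| ≤ √(n+1). Let R(c,n) be the closed solid rectangle with vertices ψ(c,n), conj(ψ(c,n)), −ψ(c,n), −conj(ψ(c,n)), where ψ(c,n) := c(n+1)/(1+c) if Re(c) ≥ 0 and ψ(c,n) := c(n+1)/(1−c) if Re(c) < 0. Then R(c,n) ⊂ ⋃_{t ∈ A_n} (t + c^{-1}·R(c,n)). -/
/-- The vertex `ψ(c,n)` of the rectangle `R(c,n)`. -/
noncomputable def psi (c : ℂ) (n : ℕ) : ℂ :=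
  if 0 ≤ c.re then c * (n + 1) / (1 + c) else c * (n + 1) / (1 - c)

/-- The closed solid axis-parallel rectangle centered at `0` with vertices
`±ψ(c,n)`, `±conj(ψ(c,n))`. -/
noncomputable def R (c : ℂ) (n : ℕ) : Set ℂ :=
  {z | |z.re| ≤ |(psi c n).re| ∧ |z.im| ≤ |(psi c n).im|}

/-!
Write `c = a + bi`; the case `a < 0` reduces to `a ≥ 0` through `c ↦ -c`, which leaves `R(c,n)`
unchanged. For `a ≥ 0` one has `ψ(c,n) = ρ (c + |c|²)` with `ρ = (n+1)/|1+c|² ≥ 1`, so `R(c,n)` is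
`|x| ≤ ρ (a + |c|²)`, `|y| ≤ ρ |b|`. Decompose `z ∈ R(c,n)` as `z = r - s c̄` with `r, s` real:
then `|s| ≤ ρ` and `|r| ≤ n + 1 - ρ`, so some `t ∈ A_n` has `|r - t| ≤ ρ`, and since `c c̄ = |c|²`
is real, `c (z - t) = (r - t) c - s |c|²` lies in `R(c,n)` again.
-/

open Complex ComplexConjugate Set

lemma exists_abs_sub_odd_le {n : ℕ} (hn : 1 ≤ n) {r ρ : ℝ} (hρ : 1 ≤ ρ)
    (hr : |r| ≤ n + 1 - ρ) : ∃ k < n, |r - (n - 1 - 2 * k)| ≤ ρ := by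
  obtain ⟨j, rfl⟩ : ∃ j, n = j + 1 := ⟨n - 1, by omega⟩
  push_cast at hr ⊢
  obtain ⟨hr₁, hr₂⟩ := abs_le.mp hr
  set m := ⌊(j + 1 - r) / 2⌋₊
  by_cases hm : m ≤ j
  · have hm₁ : (m : ℝ) ≤ (j + 1 - r) / 2 := Nat.floor_le (by linarith)
    have hm₂ : (j + 1 - r) / 2 < m + 1 := Nat.lt_floor_add_one _
    exact ⟨m, by omega, abs_le.mpr ⟨by linarith, by linarith⟩⟩
  · have hj : (j + 1 : ℝ) ≤ (j + 1 - r) / 2 := by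
      exact_mod_cast (Nat.le_floor_iff' (by omega)).mp (by omega : j + 1 ≤ m)
    exact ⟨j, by omega, abs_le.mpr ⟨by linarith, by linarith⟩⟩

noncomputable def psiScale (c : ℂ) (n : ℕ) : ℝ := (n + 1) / normSq (1 + c)

section

variable {c : ℂ} {n : ℕ}

lemma psiScale_nonneg : 0 ≤ psiScale c n :=
  div_nonneg (by positivity) (normSq_nonneg _)

lemma psi_of_re_nonneg (hre : 0 ≤ c.re) : psi c n = psiScale c n * (c + normSq c) := by
  rw [psi, if_pos hre, psiScale, div_eq_mul_inv, inv_def, map_add, map_one, ← mul_conj c]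
  push_cast
  ring

lemma mem_R_iff_of_re_nonneg (hre : 0 ≤ c.re) {z : ℂ} :
    z ∈ R c n ↔
      |z.re| ≤ psiScale c n * (c.re + normSq c) ∧ |z.im| ≤ psiScale c n * |c.im| := by
  have hpos : 0 ≤ c.re + normSq c := add_nonneg hre (normSq_nonneg c)
  simp only [R, mem_ofPred_eq, psi_of_re_nonneg hre, re_ofReal_mul, im_ofReal_mul, add_re,
    add_im, ofReal_re, ofReal_im, add_zero, abs_mul, abs_of_nonneg psiScale_nonneg,
    abs_of_nonneg hpos]

lemma sub_mul_normSq_mem_R (hre : 0 ≤ c.re) {δ s : ℝ} (hδ : |δ| ≤ psiScale c n)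
    (hs : |s| ≤ psiScale c n) : (δ * c - s * normSq c : ℂ) ∈ R c n := by
  rw [mem_R_iff_of_re_nonneg hre]
  simp only [sub_re, sub_im, re_ofReal_mul, im_ofReal_mul, ofReal_re, ofReal_im, mul_zero,
    sub_zero, abs_mul]
  constructor
  · calc |δ * c.re - s * normSq c| ≤ |δ| * c.re + |s| * normSq c := by
          refine (abs_sub _ _).trans ?_
          rw [abs_mul, abs_mul, abs_of_nonneg hre, abs_of_nonneg (normSq_nonneg c)]
      _ ≤ psiScale c n * (c.re + normSq c) := by
          rw [mul_add]
          exact add_le_add (mul_le_mul_of_nonneg_right hδ hre)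
            (mul_le_mul_of_nonneg_right hs (normSq_nonneg c))
  · exact mul_le_mul_of_nonneg_right hδ (abs_nonneg _)

lemma R_subset_iUnion_of_re_nonneg (hre : 0 ≤ c.re) (hIm : c.im ≠ 0)
    (hD : normSq (1 + c) ≤ n + 1) :
    R c n ⊆ ⋃ t ∈ Acoef n, (fun z => t + c⁻¹ * z) '' R c n := by
  have hnormSq : normSq (1 + c) = 1 + 2 * c.re + normSq c := by
    simp only [normSq_apply, add_re, add_im, one_re, one_im]; ring
  have hc : c ≠ 0 := fun h => hIm (by simp [h])
  have hcpos : 0 < normSq c := normSq_pos.mpr hc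
  have hρ : 1 ≤ psiScale c n := (one_le_div (by linarith)).mpr hD
  have hρD : psiScale c n * normSq (1 + c) = n + 1 := div_mul_cancel₀ _ (by linarith)
  have hn : 0 < n := by exact_mod_cast (show (0 : ℝ) < n by linarith)
  intro z hz
  rw [mem_R_iff_of_re_nonneg hre] at hz
  set s := z.im / c.im
  set r := z.re + c.re * s
  have hz_eq : z = r - s * conj c := by
    apply Complex.ext
    · simp only [sub_re, ofReal_re, re_ofReal_mul, conj_re, r]; ring
    · simp [s, hIm]
  have hs : |s| ≤ psiScale c n := by
    rw [abs_div, div_le_iff₀ (abs_pos.mpr hIm)]; exact hz.2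
  have hr : |r| ≤ n + 1 - psiScale c n := by
    calc |r| ≤ |z.re| + c.re * |s| := by
          refine (abs_add_le _ _).trans ?_; rw [abs_mul, abs_of_nonneg hre]
      _ ≤ psiScale c n * (c.re + normSq c) + c.re * psiScale c n := by gcongr; exact hz.1
      _ = n + 1 - psiScale c n := by rw [← hρD, hnormSq]; ring
  obtain ⟨k, hk, hδ⟩ := exists_abs_sub_odd_le hn hρ hr
  set t : ℝ := n - 1 - 2 * k
  refine mem_iUnion₂.mpr ⟨t, ⟨k, hk, by push_cast [t]; ring⟩,
    ((r - t : ℝ) : ℂ) * c - s * normSq c, sub_mul_normSq_mem_R hre hδ hs, ?_⟩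
  rw [hz_eq, ← mul_conj]
  field_simp
  push_cast
  ring

lemma psi_neg_of_re_neg (hre : c.re < 0) : psi (-c) n = -psi c n := by
  rw [psi, psi, if_pos (by rw [neg_re]; linarith), if_neg (by linarith), ← sub_eq_add_neg,
    neg_mul, neg_div]

lemma neg_mem_R_iff {z : ℂ} : -z ∈ R c n ↔ z ∈ R c n := by
  simp [R]

lemma R_subset_iUnion_of_re_neg (hre : c.re < 0) (hIm : c.im ≠ 0)
    (hD : normSq (1 - c) ≤ n + 1) :
    R c n ⊆ ⋃ t ∈ Acoef n, (fun z => t + c⁻¹ * z) '' R c n := by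
  have hR : R (-c) n = R c n := by simp [R, psi_neg_of_re_neg hre]
  have hcover := R_subset_iUnion_of_re_nonneg (c := -c) (n := n) (by rw [neg_re]; linarith)
    (by simpa using hIm) (by rwa [← sub_eq_add_neg])
  rw [hR] at hcover
  intro z hz
  obtain ⟨t, ht, w, hw, rfl⟩ := mem_iUnion₂.mp (hcover hz)
  exact mem_iUnion₂.mpr ⟨t, ht, -w, neg_mem_R_iff.mpr hw, by simp⟩

end

theorem covering_property_general (n : ℕ) (c : ℂ)
    (hIm : c.im ≠ 0)
    (h1 : ‖c + 1‖ ≤ Real.sqrt (n + 1))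
    (h2 : ‖c - 1‖ ≤ Real.sqrt (n + 1)) :
    R c n ⊆ ⋃ t ∈ Acoef n, (fun z => t + c⁻¹ * z) '' R c n := by
  have hN : (0 : ℝ) ≤ n + 1 := by positivity
  rcases le_or_gt 0 c.re with hre | hre
  · refine R_subset_iUnion_of_re_nonneg hre hIm ?_
    rw [normSq_eq_norm_sq, add_comm]
    exact (Real.le_sqrt (norm_nonneg _) hN).mp h1
  · refine R_subset_iUnion_of_re_neg hre hIm ?_
    rw [normSq_eq_norm_sq, norm_sub_rev]
    exact (Real.le_sqrt (norm_nonneg _) hN).mp h2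

theorem covering_property (n : ℕ) (hn : 2 ≤ n) (c : ℂ)
    (hIm : c.im ≠ 0) (hc : 1 < ‖c‖)
    (h1 : ‖c + 1‖ ≤ Real.sqrt (n + 1))
    (h2 : ‖c - 1‖ ≤ Real.sqrt (n + 1)) :
    R c n ⊆ ⋃ t ∈ Acoef n, (fun z => t + c⁻¹ * z) '' R c n :=
  covering_property_general n c hIm h1 h2
end

section
/- Let n ≥ 2 be an integer and c ∈ ℂ with Im(c) ≠ 0, |c| > 1, |c+1| ≤ √(2n), and |c−1| ≤ √(2n) (i.e., c ∈ X_n, with X_n defined using the index (2n-1+1)/2 = n). Then the rectangle R(c, 2n−1) is contained in E(c, 2n−1). -/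
/-!
`R(c, 2n-1)` is a bounded set with `R ⊆ ⋃ t ∈ A_{2n-1}, (t + c⁻¹ R)`: every `z ∈ R` has a digit `t`
with `c (z - t) ∈ R`. Iterating this choice from `z` gives digits `a k` and remainders
`w k ∈ R` with `z = ∑ i < k, a i / c^i + w k / c^k`; as `R` is bounded and `‖c‖ > 1`, the
remainder vanishes and `z ∈ E(c, 2n-1)`.

For the covering write `c = p + qi` with `q ≠ 0` and `z = u - s c̄` with `u, s` real. Then
`c (z - t) = c (u - t) - s |c|²`, so for a real digit `t` only `|u - t|` matters, and a digit with
`|u - t| ≤ 1` exists once `|u| ≤ 2n - 1`. With `D = (1 + |p|)² + q²`, the half-sides of `R` are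
`2n/D · (|p| + |c|²)` and `2n/D · |q|`, and both the bound on `|u|` and the final estimates reduce
to `D ≤ 2n`, i.e. to `max ‖c + 1‖ ‖c - 1‖ ≤ √(2n)`.
-/

open Bornology Filter Topology

section Attractor

variable {𝕜 : Type*} [NormedField 𝕜]

theorem summable_norm_div_pow_of_isBounded {a : ℕ → 𝕜} (ha : IsBounded (Set.range a)) {c : 𝕜}
    (hc : 1 < ‖c‖) : Summable fun k => ‖a k / c ^ k‖ := by
  obtain ⟨M, hM⟩ := isBounded_iff_forall_norm_le.1 ha
  refine Summable.of_nonneg_of_le (fun k => norm_nonneg _) (fun k => ?_)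
    ((summable_geometric_of_lt_one (by positivity) (inv_lt_one_of_one_lt₀ hc)).mul_left M)
  rw [norm_div, norm_pow, div_eq_mul_inv, ← inv_pow]
  exact mul_le_mul_of_nonneg_right (hM _ (Set.mem_range_self k)) (by positivity)

theorem exists_hasSum_div_pow_of_forall_exists_mul_sub_mem {c : 𝕜} (hc : 1 < ‖c‖)
    {D K : Set 𝕜} (hD : IsBounded D) (hK : IsBounded K)
    (hstep : ∀ z ∈ K, ∃ t ∈ D, c * (z - t) ∈ K) {z : 𝕜} (hz : z ∈ K) :
    ∃ a : ℕ → 𝕜, (∀ k, a k ∈ D) ∧ HasSum (fun k => a k / c ^ k) z := by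
  choose T hTD hTK using hstep
  let f : K → K := fun w => ⟨c * (w - T w w.2), hTK w w.2⟩
  let w : ℕ → K := fun k => f^[k] ⟨z, hz⟩
  let a : ℕ → 𝕜 := fun k => T (w k) (w k).2
  have hc0 : c ≠ 0 := norm_pos_iff.1 (one_pos.trans hc)
  have hsum : ∀ k, ∑ i ∈ Finset.range k, a i / c ^ i = z - w k / c ^ k := by
    intro k
    induction k with
    | zero => simp [w]
    | succ k ih =>
      rw [Finset.sum_range_succ, ih]
      simp only [w, Function.iterate_succ_apply', f]
      field_simp
      ring
  have hrem : Tendsto (fun k => (w k : 𝕜) / c ^ k) atTop (𝓝 0) :=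
    tendsto_zero_iff_norm_tendsto_zero.2 (summable_norm_div_pow_of_isBounded
      (hK.subset (Set.range_subset_iff.2 fun k => (w k).2)) hc).tendsto_atTop_zero
  refine ⟨a, fun k => hTD _ _, (hasSum_iff_tendsto_nat_of_summable_norm ?_).2 ?_⟩
  · exact summable_norm_div_pow_of_isBounded
      (hD.subset (Set.range_subset_iff.2 fun k => hTD _ _)) hc
  · simpa only [hsum, sub_zero] using tendsto_const_nhds.sub hrem

end Attractor

theorem isBounded_Acoef (m : ℕ) : IsBounded (Acoef m) := by
  refine (Set.finite_range fun k : Fin m => (m : ℂ) - 1 - 2 * k).isBounded.subset ?_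
  rintro _ ⟨k, hk, rfl⟩
  exact ⟨⟨k, hk⟩, rfl⟩

theorem exists_ofReal_mem_Acoef_abs_sub_le_one {m : ℕ} (hm : 1 ≤ m) {u : ℝ} (hu : |u| ≤ m) :
    ∃ t : ℝ, (t : ℂ) ∈ Acoef m ∧ |u - t| ≤ 1 := by
  set k := min (m - 1) ⌊(m - u) / 2⌋₊ with hk
  refine ⟨m - 1 - 2 * k, ⟨k, by omega, by push_cast; ring⟩, ?_⟩
  rw [abs_le] at hu ⊢
  have hk_le : (k : ℝ) ≤ (m - u) / 2 :=
    (Nat.cast_le.2 (min_le_right _ _)).trans (Nat.floor_le (by linarith))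
  have hk_ge : (m : ℝ) - 1 - 2 * k ≤ u + 1 := by
    rcases min_cases (m - 1) ⌊(m - u) / 2⌋₊ with ⟨hkm, -⟩ | ⟨hkf, -⟩
    · rw [hk, hkm]
      push_cast [Nat.cast_sub hm]
      linarith
    · rw [hk, hkf]
      linarith [Nat.lt_floor_add_one ((m - u) / 2)]
  constructor <;> linarith

theorem abs_psi_re (c : ℂ) (m : ℕ) :
    |(psi c m).re| = (m + 1) / ((1 + |c.re|) ^ 2 + c.im ^ 2) * (|c.re| + c.re ^ 2 + c.im ^ 2) := by
  rw [← abs_of_nonneg (by positivity :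
    (0 : ℝ) ≤ (m + 1) / ((1 + |c.re|) ^ 2 + c.im ^ 2) * (|c.re| + c.re ^ 2 + c.im ^ 2))]
  unfold psi
  split_ifs with h <;> [rw [abs_of_nonneg h]; rw [abs_of_nonpos (le_of_not_ge h), ← abs_neg]]
  all_goals
    congr 1
    simp only [Complex.div_re, Complex.normSq_apply, Complex.mul_re, Complex.mul_im,
      Complex.add_re, Complex.add_im, Complex.sub_re, Complex.sub_im, Complex.natCast_re,
      Complex.natCast_im, Complex.one_re, Complex.one_im]
    ring

theorem abs_psi_im (c : ℂ) (m : ℕ) :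
    |(psi c m).im| = (m + 1) / ((1 + |c.re|) ^ 2 + c.im ^ 2) * |c.im| := by
  rw [← abs_of_nonneg (by positivity : (0 : ℝ) ≤ (m + 1) / ((1 + |c.re|) ^ 2 + c.im ^ 2)),
    ← abs_mul]
  unfold psi
  split_ifs with h <;> [rw [abs_of_nonneg h]; rw [abs_of_nonpos (le_of_not_ge h)]]
  all_goals
    congr 1
    simp only [Complex.div_im, Complex.normSq_apply, Complex.mul_re, Complex.mul_im,
      Complex.add_re, Complex.add_im, Complex.sub_re, Complex.sub_im, Complex.natCast_re,
      Complex.natCast_im, Complex.one_re, Complex.one_im]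
    ring

theorem mem_R_iff {c z : ℂ} {m : ℕ} : z ∈ R c m ↔
    |z.re| ≤ (m + 1) / ((1 + |c.re|) ^ 2 + c.im ^ 2) * (|c.re| + c.re ^ 2 + c.im ^ 2) ∧
    |z.im| ≤ (m + 1) / ((1 + |c.re|) ^ 2 + c.im ^ 2) * |c.im| := by
  rw [← abs_psi_re, ← abs_psi_im]
  rfl

theorem isBounded_R (c : ℂ) (m : ℕ) : IsBounded (R c m) :=
  (Metric.isBounded_closedBall (x := 0)).subset fun z hz => mem_closedBall_zero_iff.2
    ((Complex.norm_le_abs_re_add_abs_im z).trans (add_le_add hz.1 hz.2))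

theorem exists_mem_Acoef_mul_sub_mem_R {c : ℂ} {m : ℕ} (hIm : c.im ≠ 0)
    (hD : (1 + |c.re|) ^ 2 + c.im ^ 2 ≤ m + 1) {z : ℂ} (hz : z ∈ R c m) :
    ∃ t ∈ Acoef m, c * (z - t) ∈ R c m := by
  obtain ⟨hx, hy⟩ := mem_R_iff.1 hz
  set D := (1 + |c.re|) ^ 2 + c.im ^ 2 with hD_def
  set r := ((m : ℝ) + 1) / D
  have hq : 0 < |c.im| := abs_pos.2 hIm
  have hD1 : 1 < D := by nlinarith [abs_nonneg c.re, pow_pos hq 2, sq_abs c.im]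
  have hr : 1 ≤ r := (one_le_div (by linarith)).2 hD
  have hrD : r * D = m + 1 := div_mul_cancel₀ _ (by positivity)
  set s := z.im / c.im
  set u := z.re + c.re * s
  have hs : |s| ≤ r := by rw [abs_div, div_le_iff₀ hq]; exact hy
  have hu : |u| ≤ m := calc
    |u| ≤ |z.re| + |c.re| * |s| := (abs_add_le _ _).trans_eq (by rw [abs_mul])
    _ ≤ r * (|c.re| + c.re ^ 2 + c.im ^ 2) + |c.re| * r := by gcongr
    _ = r * D - r := by rw [hD_def, ← sq_abs c.re]; ring
    _ ≤ m := by rw [hrD]; linarith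
  have hm : 1 ≤ m := Nat.cast_pos.1 (show (0 : ℝ) < m by linarith)
  obtain ⟨t, ht, hut⟩ := exists_ofReal_mem_Acoef_abs_sub_le_one hm hu
  have hw : c * (z - t) = c * (u - t : ℝ) - (s * Complex.normSq c : ℝ) := by
    apply Complex.ext <;>
      simp only [Complex.mul_re, Complex.mul_im, Complex.sub_re, Complex.sub_im, Complex.ofReal_re,
        Complex.ofReal_im, Complex.normSq_apply, u, s] <;>
      field_simp <;> ring
  refine ⟨t, ht, mem_R_iff.2 ⟨?_, ?_⟩⟩ <;> rw [hw]
  · have hN := Complex.normSq_nonneg c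
    simp only [Complex.sub_re, Complex.mul_re,
      Complex.ofReal_re, Complex.ofReal_im, mul_zero, sub_zero]
    calc |c.re * (u - t) - s * Complex.normSq c|
        ≤ |c.re| * |u - t| + |s| * Complex.normSq c :=
          (abs_sub _ _).trans_eq (by rw [abs_mul, abs_mul, abs_of_nonneg hN])
      _ ≤ |c.re| * 1 + r * Complex.normSq c := by gcongr
      _ ≤ r * (|c.re| + c.re ^ 2 + c.im ^ 2) := by
          rw [Complex.normSq_apply]
          nlinarith [abs_nonneg c.re]
  · simp only [Complex.sub_im, Complex.mul_im, Complex.ofReal_re, Complex.ofReal_im, mul_zero,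
      zero_add, sub_zero, abs_mul]
    calc |c.im| * |u - t| ≤ 1 * |c.im| := by nlinarith
      _ ≤ r * |c.im| := by gcongr

theorem one_add_abs_re_sq_add_im_sq_le {c : ℂ} {r : ℝ} (h1 : ‖c + 1‖ ≤ r) (h2 : ‖c - 1‖ ≤ r) :
    (1 + |c.re|) ^ 2 + c.im ^ 2 ≤ r ^ 2 := by
  rcases le_total 0 c.re with h | h
  · have h1' := pow_le_pow_left₀ (norm_nonneg _) h1 2
    rw [Complex.sq_norm, Complex.normSq_apply] at h1'
    simp only [Complex.add_re, Complex.one_re, Complex.add_im, Complex.one_im, add_zero] at h1'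
    rw [abs_of_nonneg h]
    nlinarith
  · have h2' := pow_le_pow_left₀ (norm_nonneg _) h2 2
    rw [Complex.sq_norm, Complex.normSq_apply] at h2'
    simp only [Complex.sub_re, Complex.one_re, Complex.sub_im, Complex.one_im, sub_zero] at h2'
    rw [abs_of_nonpos h]
    nlinarith

theorem rect_subset_E_general (n : ℕ) (c : ℂ)
    (hIm : c.im ≠ 0) (hc : 1 < ‖c‖)
    (h1 : ‖c + 1‖ ≤ Real.sqrt (2 * n))
    (h2 : ‖c - 1‖ ≤ Real.sqrt (2 * n)) :
    R c (2 * n - 1) ⊆ E c (2 * n - 1) := by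
  have hD : (1 + |c.re|) ^ 2 + c.im ^ 2 ≤ ((2 * n - 1 : ℕ) : ℝ) + 1 := by
    have h := one_add_abs_re_sq_add_im_sq_le h1 h2
    rw [Real.sq_sqrt (by positivity)] at h
    have hn : 0 < n := Nat.cast_pos.1 (by nlinarith [abs_nonneg c.re, sq_nonneg c.im] : (0 : ℝ) < n)
    push_cast [Nat.cast_sub (by omega : 1 ≤ 2 * n)]
    linarith
  intro z hz
  exact exists_hasSum_div_pow_of_forall_exists_mul_sub_mem hc (isBounded_Acoef _) (isBounded_R c _)
    (fun w hw => exists_mem_Acoef_mul_sub_mem_R hIm hD hw) hz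

theorem rect_subset_E (n : ℕ) (hn : 2 ≤ n) (c : ℂ)
    (hIm : c.im ≠ 0) (hc : 1 < ‖c‖)
    (h1 : ‖c + 1‖ ≤ Real.sqrt (2 * n))
    (h2 : ‖c - 1‖ ≤ Real.sqrt (2 * n)) :
    R c (2 * n - 1) ⊆ E c (2 * n - 1) :=
  rect_subset_E_general n c hIm hc h1 h2
end

section
/- M_n is the closure (within {c : |c| > 1}) of the set M̂_n of zeros of polynomials with coefficients in D_n: M_n = clos(M̂_n) ∩ {c : |c| > 1}, where M̂_n := { c ∈ ℂ : |c| > 1 and ∃ m ≥ 1, a_1,...,a_m ∈ D_n with 1 + Σ_{k=1}^m a_k c^{-k} = 0 }. -/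
/-- The connectedness locus `M n` (power-series characterization). -/
def M (n : ℕ) : Set ℂ :=
  {c | 1 < ‖c‖ ∧
    ∃ a : ℕ → ℂ, (∀ k, a k ∈ Dcoef n) ∧ HasSum (fun k => a k / c ^ (k + 1)) (-1)}

/-- The set of polynomial zeros `M̂ n`. -/
def Mhat (n : ℕ) : Set ℂ :=
  {c | 1 < ‖c‖ ∧
    ∃ m : ℕ, 1 ≤ m ∧ ∃ a : ℕ → ℂ, (∀ k < m, a k ∈ Dcoef n) ∧
      1 + ∑ k ∈ Finset.range m, a k / c ^ (k + 1) = 0}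

/-! In the variable `z = c⁻¹` the series `1 + ∑ aₖ zᵏ⁺¹` has bounded coefficients, so its
truncations `Pₘ` converge to it locally uniformly on the unit disc. If it vanishes at `c⁻¹`,
Hurwitz's theorem gives zeros of the `Pₘ` near `c⁻¹`, and their inverses lie in `M̂ n`.
Conversely `M̂ n ⊆ M n` by padding with zeros, and `M n` is closed in `{1 < ‖c‖}`: coefficient
sequences range over the compact set `(Dcoef n)^ℕ`, and the series depends continuously on the
coefficients and on `c` by dominated convergence. -/

open Filter Metric Set Topology

lemma norm_le_of_mem_Dcoef {n : ℕ} {x : ℂ} (hx : x ∈ Dcoef n) : ‖x‖ ≤ (n : ℝ) - 1 := by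
  obtain ⟨j, hj, rfl⟩ := hx
  rw [Complex.norm_intCast]
  exact_mod_cast hj

lemma finite_Dcoef (n : ℕ) : (Dcoef n).Finite := by
  refine ((finite_Icc (1 - (n : ℤ)) (n - 1)).image (fun j : ℤ => (j : ℂ))).subset ?_
  rintro x ⟨j, hj, rfl⟩
  exact ⟨j, by rw [abs_le] at hj; exact ⟨by omega, hj.2⟩, rfl⟩

lemma zero_mem_Dcoef_of_mem {n : ℕ} {x : ℂ} (hx : x ∈ Dcoef n) : (0 : ℂ) ∈ Dcoef n := by
  obtain ⟨j, hj, -⟩ := hx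
  exact ⟨0, by simpa using (abs_nonneg j).trans hj, by simp⟩

lemma norm_mul_pow_succ_le {x z : ℂ} {B ρ : ℝ} (hx : ‖x‖ ≤ B) (hz : ‖z‖ ≤ ρ) (k : ℕ) :
    ‖x * z ^ (k + 1)‖ ≤ B * ρ ^ (k + 1) := by
  rw [norm_mul, norm_pow]
  exact mul_le_mul hx (pow_le_pow_left₀ (norm_nonneg z) hz _) (by positivity)
    ((norm_nonneg x).trans hx)

lemma summable_mul_pow_succ (B : ℝ) {ρ : ℝ} (hρ₀ : 0 ≤ ρ) (hρ₁ : ρ < 1) :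
    Summable fun k : ℕ => B * ρ ^ (k + 1) :=
  (summable_nat_add_iff 1).mpr ((summable_geometric_of_lt_one hρ₀ hρ₁).mul_left B)

lemma tendstoLocallyUniformlyOn_one_add_sum_mul_pow_succ {a : ℕ → ℂ} {B : ℝ}
    (ha : ∀ k, ‖a k‖ ≤ B) :
    TendstoLocallyUniformlyOn (fun m z => 1 + ∑ k ∈ Finset.range m, a k * z ^ (k + 1))
      (fun z => 1 + ∑' k, a k * z ^ (k + 1)) atTop (ball 0 1) := by
  refine tendstoLocallyUniformlyOn_of_forall_exists_nhds fun x hx => ?_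
  obtain ⟨ρ, hxρ, hρ₁⟩ := exists_between (mem_ball_zero_iff.mp hx)
  refine ⟨ball 0 ρ, mem_nhdsWithin_of_mem_nhds (isOpen_ball.mem_nhds (by simpa using hxρ)), ?_⟩
  have hsum := tendstoUniformlyOn_tsum_nat (summable_mul_pow_succ B
    ((norm_nonneg x).trans hxρ.le) hρ₁) (f := fun k (z : ℂ) => a k * z ^ (k + 1)) (s := ball 0 ρ)
    fun k z hz => norm_mul_pow_succ_le (ha k) (mem_ball_zero_iff.mp hz).le k
  rw [Metric.tendstoUniformlyOn_iff] at hsum ⊢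
  simpa only [dist_add_left] using hsum

/-- Minimum modulus principle, via the maximum modulus principle for `1 / g`. -/
lemma DiffContOnCl.exists_eq_zero_of_norm_lt {g : ℂ → ℂ} {z₀ : ℂ} {r : ℝ}
    (hg : DiffContOnCl ℂ g (ball z₀ r)) (hr : 0 < r)
    (hlt : ∀ z ∈ sphere z₀ r, ‖g z₀‖ < ‖g z‖) : ∃ z ∈ closedBall z₀ r, g z = 0 := by
  by_contra! hne
  rw [← closure_ball z₀ hr.ne'] at hne
  obtain ⟨w, hw, hmax⟩ := Complex.exists_mem_frontier_isMaxOn_norm isBounded_ball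
    (nonempty_ball.mpr hr) (hg.inv hne)
  rw [frontier_ball z₀ hr.ne'] at hw
  have hz₀ : z₀ ∈ closure (ball z₀ r) := subset_closure (mem_ball_self hr)
  have hle : ‖(g z₀)⁻¹‖ ≤ ‖(g w)⁻¹‖ := hmax hz₀
  rw [norm_inv, norm_inv] at hle
  exact (hlt w hw).not_ge ((inv_le_inv₀ (norm_pos_iff.mpr (hne z₀ hz₀))
    ((norm_nonneg _).trans_lt (hlt w hw))).mp hle)

/-- Hurwitz's theorem. -/
theorem TendstoLocallyUniformlyOn.eventually_exists_zero_mem {ι : Type*} {p : Filter ι}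
    [p.NeBot] {F : ι → ℂ → ℂ} {f : ℂ → ℂ} {U V : Set ℂ} {z₀ : ℂ}
    (hF : TendstoLocallyUniformlyOn F f p U) (hFd : ∀ᶠ i in p, DifferentiableOn ℂ (F i) U)
    (hU : IsOpen U) (hz₀ : z₀ ∈ U) (hf₀ : f z₀ = 0) (hne : ∀ᶠ z in 𝓝[≠] z₀, f z ≠ 0)
    (hV : V ∈ 𝓝 z₀) : ∀ᶠ i in p, ∃ z ∈ V, F i z = 0 := by
  rw [eventually_nhdsWithin_iff] at hne
  obtain ⟨r, hr, hrU⟩ := nhds_basis_closedBall.mem_iff.mp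
    (inter_mem (inter_mem (hU.mem_nhds hz₀) hV) hne)
  have hsub : closedBall z₀ r ⊆ U := fun z hz => (hrU hz).1.1
  have hfc : ContinuousOn f (sphere z₀ r) :=
    (hF.differentiableOn hFd hU).continuousOn.mono (sphere_subset_closedBall.trans hsub)
  obtain ⟨w, hw, hmin⟩ := (isCompact_sphere z₀ r).exists_isMinOn
    (NormedSpace.sphere_nonempty.mpr hr.le) hfc.norm
  have hδ : 0 < ‖f w‖ := by
    refine norm_pos_iff.mpr ((hrU (sphere_subset_closedBall hw)).2 fun h => ?_)
    rw [mem_sphere, h, dist_self] at hw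
    exact hr.ne hw
  have hunif := (tendstoLocallyUniformlyOn_iff_forall_isCompact hU).mp hF _ hsub
    (isCompact_closedBall z₀ r)
  filter_upwards [hFd, Metric.tendstoUniformlyOn_iff.mp hunif _ (half_pos hδ)] with i hdi hi
  have hcentre : ‖F i z₀‖ < ‖f w‖ / 2 := by
    simpa [hf₀] using hi z₀ (mem_closedBall_self hr.le)
  obtain ⟨z, hz, hzero⟩ := (hdi.diffContOnCl_ball hsub).exists_eq_zero_of_norm_lt hr
    fun z hz => by
      have h₁ := hi z (sphere_subset_closedBall hz)
      have h₂ : ‖f w‖ ≤ ‖f z‖ := hmin hz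
      rw [dist_eq_norm] at h₁
      linarith [norm_sub_norm_le (f z) (F i z), norm_sub_rev (f z) (F i z)]
  exact ⟨z, (hrU hz).1.2, hzero⟩

lemma Mhat_subset_M (n : ℕ) : Mhat n ⊆ M n := by
  rintro c ⟨hc, m, hm, a, ha, hzero⟩
  have h₀ : (0 : ℂ) ∈ Dcoef n := zero_mem_Dcoef_of_mem (ha 0 hm)
  refine ⟨hc, fun k => if k < m then a k else 0, fun k => ?_, ?_⟩
  · dsimp only
    split_ifs with hk
    exacts [ha k hk, h₀]
  · have hsum : ∑ k ∈ Finset.range m, (if k < m then a k else 0) / c ^ (k + 1) = -1 := by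
      rw [Finset.sum_congr rfl fun k hk => by rw [if_pos (Finset.mem_range.mp hk)]]
      linear_combination hzero
    rw [← hsum]
    exact hasSum_sum_of_ne_finset_zero fun k hk => by
      dsimp only
      rw [if_neg (by simpa using hk), zero_div]

lemma mem_M_iff {n : ℕ} {c : ℂ} : c ∈ M n ↔
    1 < ‖c‖ ∧ ∃ a : ℕ → ℂ, (∀ k, a k ∈ Dcoef n) ∧ HasSum (fun k => a k * c⁻¹ ^ (k + 1)) (-1) := by
  simp only [M, mem_ofPred_eq, div_eq_mul_inv, inv_pow]

lemma mem_M_of_mem_closure {n : ℕ} {c : ℂ} (hcl : c ∈ closure (M n)) (hc : 1 < ‖c‖) :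
    c ∈ M n := by
  obtain ⟨c', hc'M, hc'c⟩ := mem_closure_iff_seq_limit.mp hcl
  choose _ a ha hsum using fun j => mem_M_iff.mp (hc'M j)
  obtain ⟨b, hb, φ, hφ, hab⟩ :=
    (isCompact_univ_pi fun _ => (finite_Dcoef n).isCompact).tendsto_subseq fun j k _ => ha j k
  have hz : Tendsto (fun j => (c' (φ j))⁻¹) atTop (𝓝 c⁻¹) :=
    (hc'c.comp hφ.tendsto_atTop).inv₀ (norm_pos_iff.mp (one_pos.trans hc))
  obtain ⟨ρ, hcρ, hρ₁⟩ := exists_between (inv_lt_one_of_one_lt₀ hc)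
  rw [← norm_inv] at hcρ
  have hρ₀ : 0 ≤ ρ := (norm_nonneg _).trans hcρ.le
  have hlim := tendsto_tsum_of_dominated_convergence (summable_mul_pow_succ ((n : ℝ) - 1) hρ₀ hρ₁)
    (f := fun j k => a (φ j) k * (c' (φ j))⁻¹ ^ (k + 1)) (g := fun k => b k * c⁻¹ ^ (k + 1))
    (fun k => (tendsto_pi_nhds.mp hab k).mul (hz.pow _))
    ((hz.norm.eventually (eventually_le_nhds hcρ)).mono fun j hj k =>
      norm_mul_pow_succ_le (norm_le_of_mem_Dcoef (ha _ k)) hj k)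
  simp only [fun j => (hsum (φ j)).tsum_eq] at hlim
  have hb_summable : Summable fun k => b k * c⁻¹ ^ (k + 1) :=
    .of_norm_bounded (summable_mul_pow_succ ((n : ℝ) - 1) hρ₀ hρ₁) fun k =>
      norm_mul_pow_succ_le (norm_le_of_mem_Dcoef (hb k (mem_univ k))) hcρ.le k
  refine mem_M_iff.mpr ⟨hc, b, fun k => hb k (mem_univ k), ?_⟩
  rw [tendsto_nhds_unique tendsto_const_nhds hlim]
  exact hb_summable.hasSum

lemma inv_mem_Mhat {n m : ℕ} {a : ℕ → ℂ} {z : ℂ} (hz : z ∈ ball 0 1) (hm : 1 ≤ m)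
    (ha : ∀ k < m, a k ∈ Dcoef n) (hzero : 1 + ∑ k ∈ Finset.range m, a k * z ^ (k + 1) = 0) :
    z⁻¹ ∈ Mhat n := by
  have hz₀ : z ≠ 0 := by
    rintro rfl
    simp at hzero
  refine ⟨?_, m, hm, a, ha, by simpa [div_eq_mul_inv, inv_pow] using hzero⟩
  rw [norm_inv]
  exact (one_lt_inv₀ (norm_pos_iff.mpr hz₀)).mpr (mem_ball_zero_iff.mp hz)

lemma M_subset_closure_Mhat (n : ℕ) : M n ⊆ closure (Mhat n) := by
  intro c hc
  obtain ⟨hc₁, a, ha, hsum⟩ := mem_M_iff.mp hc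
  have hc₀ : c ≠ 0 := norm_pos_iff.mp (one_pos.trans hc₁)
  have hz₀ : c⁻¹ ∈ ball (0 : ℂ) 1 := by
    rw [mem_ball_zero_iff, norm_inv]
    exact inv_lt_one_of_one_lt₀ hc₁
  set P : ℕ → ℂ → ℂ := fun m z => 1 + ∑ k ∈ Finset.range m, a k * z ^ (k + 1)
  set F : ℂ → ℂ := fun z => 1 + ∑' k, a k * z ^ (k + 1)
  have hPF : TendstoLocallyUniformlyOn P F atTop (ball 0 1) :=
    tendstoLocallyUniformlyOn_one_add_sum_mul_pow_succ fun k => norm_le_of_mem_Dcoef (ha k)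
  have hPd : ∀ m, DifferentiableOn ℂ (P m) (ball 0 1) :=
    fun m => Differentiable.differentiableOn (by fun_prop)
  have hFa : AnalyticOnNhd ℂ F (ball 0 1) :=
    (hPF.differentiableOn (.of_forall hPd) isOpen_ball).analyticOnNhd isOpen_ball
  have hF₀ : F 0 = 1 := by simp [F]
  have hFz₀ : F c⁻¹ = 0 := by simp only [F, hsum.tsum_eq]; ring
  have hne : ∀ᶠ z in 𝓝[≠] c⁻¹, F z ≠ 0 := not_frequently.mp fun h => one_ne_zero <| hF₀ ▸
    hFa.eqOn_zero_of_preconnected_of_frequently_eq_zero (convex_ball 0 1).isPreconnected hz₀ h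
      (mem_ball_self one_pos)
  refine mem_closure_iff_nhds.mpr fun V hV => ?_
  have hV' : (·⁻¹) ⁻¹' V ∩ ball 0 1 ∈ 𝓝 c⁻¹ :=
    inter_mem ((continuousAt_inv₀ (inv_ne_zero hc₀)).preimage_mem_nhds (by rwa [inv_inv]))
      (isOpen_ball.mem_nhds hz₀)
  obtain ⟨m, hm, z, ⟨hzV, hz₁⟩, hPz⟩ := ((eventually_ge_atTop 1).and
    (hPF.eventually_exists_zero_mem (.of_forall hPd) isOpen_ball hz₀ hFz₀ hne hV')).exists
  exact ⟨z⁻¹, hzV, inv_mem_Mhat hz₁ hm (fun k _ => ha k) hPz⟩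

theorem M_eq_closure_Mhat_general (n : ℕ) :
    M n = closure (Mhat n) ∩ {c : ℂ | 1 < ‖c‖} := by
  ext c
  refine ⟨fun hc => ⟨M_subset_closure_Mhat n hc, hc.1⟩, fun ⟨hcl, hc⟩ => ?_⟩
  exact mem_M_of_mem_closure (closure_mono (Mhat_subset_M n) hcl) hc

theorem M_eq_closure_Mhat (n : ℕ) (hn : 2 ≤ n) :
    M n = closure (Mhat n) ∩ {c : ℂ | 1 < ‖c‖} :=
  M_eq_closure_Mhat_general n
end
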